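/- Let P be a Łukasiewicz path and T = τ(P) the plane tree associated to P by the classical bijection. Then area(P) = rthorn(T). -/

import Mathlib

/-! ## Plane trees -/

/-- A plane tree: a root together with an ordered (left-to-right) list of subtrees.
A node is a *leaf* if it has no children, and *internal* otherwise. -/
inductive PTree : Type where
  | node : List PTree → PTree


namespace Luka

/-! ## Łukasiewicz paths

A path is encoded by its list of step increments: the step `(1,k)` (an up-step `U_k` of
degree `k`) is encoded by `k : ℤ` with `k ≥ 0`, and the down step `D = (1,-1)` by `-1`. -/

/-- `P` is a Łukasiewicz path: it is nonempty, uses steps `(1,k)` with `k ≥ -1`,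
stays (weakly) above the `x`-axis before its last step, and ends at height `-1`
(so that it goes strictly below the axis only at the last step, which is forced
to be the down-step `D`). -/
def IsLukas (P : List ℤ) : Prop :=
  P ≠ [] ∧ (∀ s ∈ P, -1 ≤ s) ∧ (∀ n, n < P.length → 0 ≤ (P.take n).sum) ∧ P.sum = -1

/-- The degrees of the up-steps of `P`, from left to right (the *profile* of `P`). -/
def upDegs (P : List ℤ) : List ℕ := (P.filter (fun s => 0 ≤ s)).map Int.toNat

/-- The profile multiset `𝔐(P)`: the multiset of degrees of the up-steps of `P`. -/
def profileM (P : List ℤ) : Multiset ℕ := (upDegs P : Multiset ℕ)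

/-- The degree of the first up-step of `P`, if any. -/
def firstUp? (P : List ℤ) : Option ℕ := (upDegs P).head?

/-- The degree of the last up-step of `P`, if any. -/
def lastUp? (P : List ℤ) : Option ℕ := (upDegs P).getLast?

/-- Auxiliary: starting from height `h`, record the starting height of every up-step. -/
def areaVecAux : ℤ → List ℤ → List ℤ
  | _, [] => []
  | h, s :: rest => (if 0 ≤ s then [h] else []) ++ areaVecAux (h + s) rest

/-- The area vector `Area(P)`: the `i`-th entry is the `y`-coordinate of the starting
point of the `i`-th up-step of `P`. -/
def areaVec (P : List ℤ) : List ℤ := areaVecAux 0 P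

/-- `area(P)`: the sum of the entries of the area vector (entries of a Łukasiewicz
path are nonnegative, so taking `Int.toNat` entrywise is harmless). -/
def area (P : List ℤ) : ℕ := ((areaVec P).map Int.toNat).sum

/-- Auxiliary computation of the depth values: `cur` is the depth value of the previous
step (`0` initially), and `stack` holds the pending depth values of the future matching
down-steps (top of the stack = value for the next matching down-step to come).
Reading an up-step `U_k` whose value is `cur` (inherited from the previous step) pushes
the values `cur+1, …, cur+k` for its `k` matching down-steps (its first matching
down-step, which crosses its topmost interior level, gets `cur+1`, etc.); reading a
down-step pops its value.  The list returned records the value `d_i` of each up-step,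
from left to right. -/
def depthVecAux : ℕ → List ℕ → List ℤ → List ℕ
  | _, _, [] => []
  | cur, stack, s :: rest =>
    if 0 ≤ s then
      cur :: depthVecAux cur ((List.range s.toNat).map (fun i => cur + i + 1) ++ stack) rest
    else
      match stack with
      | [] => depthVecAux cur [] rest
      | v :: st => depthVecAux v st rest

/-- The depth vector `Depth(P)`: the values `d_i` at the up-steps of `P`, left to right. -/
def depthVec (P : List ℤ) : List ℕ := depthVecAux 0 [] P

/-- `depth(P)`: the sum of the entries of the depth vector. -/
def depth (P : List ℤ) : ℕ := (depthVec P).sum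

/-- `P ∈ 𝓛_M`. -/
def MemL (M : Multiset ℕ) (P : List ℤ) : Prop := IsLukas P ∧ profileM P = M

/-- `P ∈ 𝓛_{a,M}`: first up-step of degree `a`, profile multiset `M ⊎ {a}`. -/
def MemLa (a : ℕ) (M : Multiset ℕ) (P : List ℤ) : Prop :=
  IsLukas P ∧ firstUp? P = some a ∧ profileM P = a ::ₘ M

/-- `P ∈ 𝓛_{M,b}`: last up-step of degree `b`, profile multiset `M ⊎ {b}`. -/
def MemLb (M : Multiset ℕ) (b : ℕ) (P : List ℤ) : Prop :=
  IsLukas P ∧ lastUp? P = some b ∧ profileM P = b ::ₘ M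

/-- `P ∈ 𝓛_{a,M,b}`: first up-step of degree `a`, last up-step of degree `b`,
profile multiset `M ⊎ {a, b}`. -/
def MemLab (a : ℕ) (M : Multiset ℕ) (b : ℕ) (P : List ℤ) : Prop :=
  IsLukas P ∧ firstUp? P = some a ∧ lastUp? P = some b ∧ profileM P = a ::ₘ b ::ₘ M

/-! ## Plane-tree statistics -/

/-- The (ordered) children of the root of a plane tree. -/
def children : PTree → List PTree
  | .node ts => ts

/-- The degree of (the root of) a plane tree: its number of children. -/
def numChildren (t : PTree) : ℕ := (children t).length

mutual
/-- Number of internal nodes of a plane tree. -/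
def internCount : PTree → ℕ
  | .node [] => 0
  | .node (t :: ts) => 1 + internCountL (t :: ts)
def internCountL : List PTree → ℕ
  | [] => 0
  | t :: ts => internCount t + internCountL ts
end

mutual
/-- `lthornT T` = the sum of `lthorn(u)` over all internal nodes `u` of `T`, where
`lthorn(u)` is the number of descending edges of strict ancestors `v` of `u` lying to
the left of the path from `v` to `u`.  (Every internal node of the subtree rooted at
the `i`-th child (0-indexed) of a node gains `i` left thorns from that node.) -/
def lthornT : PTree → ℕ
  | .node ts => lthornL 0 ts
def lthornL : ℕ → List PTree → ℕ
  | _, [] => 0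
  | i, t :: ts => lthornT t + i * internCount t + lthornL (i + 1) ts
end

mutual
/-- `rthornT T` = the sum of `rthorn(u)` over all internal nodes `u` of `T`, where
`rthorn(u)` is the number of descending edges of strict ancestors `v` of `u` lying to
the right of the path from `v` to `u`. -/
def rthornT : PTree → ℕ
  | .node ts => rthornL ts
def rthornL : List PTree → ℕ
  | [] => 0
  | t :: ts => rthornT t + ts.length * internCount t + rthornL ts
end

mutual
/-- The list of the values `lthorn(u)` for the internal nodes `u` of `T`, in
contour-walk (preorder) order. -/
def lthornList : PTree → List ℕ
  | .node [] => []
  | .node (t :: ts) => 0 :: lthornLL 0 (t :: ts)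
def lthornLL : ℕ → List PTree → List ℕ
  | _, [] => []
  | i, t :: ts => (lthornList t).map (· + i) ++ lthornLL (i + 1) ts
end

mutual
/-- The list of the values `rthorn(u)` for the internal nodes `u` of `T`, in
contour-walk (preorder) order. -/
def rthornList : PTree → List ℕ
  | .node [] => []
  | .node (t :: ts) => 0 :: rthornLL (t :: ts)
def rthornLL : List PTree → List ℕ
  | [] => []
  | t :: ts => (rthornList t).map (· + ts.length) ++ rthornLL ts
end

/-! ## The bijections `λ` and `τ` -/

mutual
/-- `λ`: record each node of the tree at its first visit in the left-to-right contour
walk: `U_k` (i.e. `k`) for an internal node with `k+1` children, `D` (i.e. `-1`)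
for a leaf. -/
def lambdaT : PTree → List ℤ
  | .node ts => ((ts.length : ℤ) - 1) :: lambdaL ts
def lambdaL : List PTree → List ℤ
  | [] => []
  | t :: ts => lambdaT t ++ lambdaL ts
end

/-- Auxiliary for `τ`: reading the path from right to left, maintain the stack of the
already-built subtrees (in left-to-right order); a down-step `D` creates a leaf and an
up-step `U_k` grabs the `k+1` topmost subtrees as its children.  This builds the same
tree as the left-to-right "leftmost bud" construction. -/
def tauStack (P : List ℤ) : List PTree :=
  P.foldr (fun s st =>
    if s < 0 then PTree.node [] :: st
    else PTree.node (st.take (s.toNat + 1)) :: st.drop (s.toNat + 1)) []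

/-- `τ`: the plane tree associated with a Łukasiewicz path. -/
def tau (P : List ℤ) : PTree := (tauStack P).headD (.node [])

mutual
/-- The mirror of a plane tree: reverse the left-to-right order of the children of
every internal node. -/
def mir : PTree → PTree
  | .node ts => .node (mirL ts).reverse
def mirL : List PTree → List PTree
  | [] => []
  | t :: ts => mir t :: mirL ts
end

mutual
/-- The subtrees rooted at the internal nodes of `T`, in contour-walk (preorder)
order. -/
def internalSubtrees : PTree → List PTree
  | .node [] => []
  | .node (t :: ts) => .node (t :: ts) :: internalSubtreesL (t :: ts)
def internalSubtreesL : List PTree → List PTree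
  | [] => []
  | t :: ts => internalSubtrees t ++ internalSubtreesL ts
end

/-- The multiset of degrees of the non-root internal nodes of `T`. -/
def nonRootInternalDegs (T : PTree) : Multiset ℕ :=
  (((internalSubtreesL (children T)).map numChildren : List ℕ) : Multiset ℕ)

/-! ## Lodestars and the lodestar swap -/

/-- A node is a lodestar-type node if it is internal and all its children are leaves. -/
def isLodestarNode (t : PTree) : Bool :=
  !(children t).isEmpty && (children t).all (fun c => (children c).isEmpty)

mutual
/-- The subtree rooted at the *left lodestar* of `T`: the first internal node, in
contour-walk (preorder) order, all of whose children are leaves (if it exists). -/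
def leftLode? : PTree → Option PTree
  | .node ts =>
    if isLodestarNode (.node ts) then some (.node ts) else leftLodeL? ts
def leftLodeL? : List PTree → Option PTree
  | [] => none
  | t :: ts =>
    match leftLode? t with
    | some r => some r
    | none => leftLodeL? ts
end

mutual
/-- The subtree rooted at the *right lodestar* of `T`: the last internal node, in
contour-walk (preorder) order, all of whose children are leaves (if it exists). -/
def rightLode? : PTree → Option PTree
  | .node ts =>
    match rightLodeL? ts with
    | some r => some r
    | none => if isLodestarNode (.node ts) then some (.node ts) else none
def rightLodeL? : List PTree → Option PTree
  | [] => none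
  | t :: ts =>
    match rightLodeL? ts with
    | some r => some r
    | none => rightLode? t
end

mutual
/-- Replace the left lodestar of `T` (first preorder all-leaf-children internal node)
by the tree `r`; `none` if `T` has no internal node. -/
def replF : PTree → PTree → Option PTree
  | r, .node ts =>
    if isLodestarNode (.node ts) then some r
    else (replFL r ts).map PTree.node
def replFL : PTree → List PTree → Option (List PTree)
  | _, [] => none
  | r, t :: ts =>
    match replF r t with
    | some t' => some (t' :: ts)
    | none => (replFL r ts).map (t :: ·)
end

mutual
/-- Replace the right lodestar of `T` (last preorder all-leaf-children internal node)
by the tree `r`; `none` if `T` has no internal node. -/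
def replL : PTree → PTree → Option PTree
  | r, .node ts =>
    match replLL r ts with
    | some ts' => some (.node ts')
    | none => if isLodestarNode (.node ts) then some r else none
def replLL : PTree → List PTree → Option (List PTree)
  | _, [] => none
  | r, t :: ts =>
    match replLL r ts with
    | some ts' => some (t :: ts')
    | none => (replL r t).map (· :: ts)
end

/-- The lodestar swap: exchange the subtrees rooted at the left lodestar and the
right lodestar of `T` (each a node together with its pendant leaves). -/
def lodeSwap (T : PTree) : PTree :=
  match leftLode? T, rightLode? T with
  | some L, some R => ((replF R T).bind (replL L)).getD T
  | _, _ => T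
end Luka

/-! The area vector of `λ(T)` is computed subtree by subtree: a node with `k + 1` children
whose up-step starts at height `h` leaves its `j`-th child (0-indexed) at height
`h + k - j`, since each complete subtree lowers the height by one.  So the height at which
an internal node is recorded exceeds the height of its parent's record by exactly the
number of its right thorns at that parent, and summing over all internal nodes gives
`rthorn(T)`.  Since `λ ∘ τ` is the identity on Łukasiewicz paths, the theorem follows. -/

namespace Luka

theorem areaVecAux_append (h : ℤ) (A B : List ℤ) :
    areaVecAux h (A ++ B) = areaVecAux h A ++ areaVecAux (h + A.sum) B := by
  induction A generalizing h with
  | nil => simp [areaVecAux]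
  | cons s A ih => simp only [List.cons_append, areaVecAux, ih, List.sum_cons, add_assoc,
      List.append_assoc]

theorem exists_eq_add_sum_take_of_mem_areaVecAux {h x : ℤ} {P : List ℤ}
    (hx : x ∈ areaVecAux h P) : ∃ n < P.length, x = h + (P.take n).sum := by
  induction P generalizing h with
  | nil => simp [areaVecAux] at hx
  | cons s P ih =>
    simp only [areaVecAux, List.mem_append] at hx
    rcases hx with hx | hx
    · exact ⟨0, by simp, by split_ifs at hx <;> simp_all⟩
    · obtain ⟨n, hn, rfl⟩ := ih hx
      exact ⟨n + 1, by simpa using hn, by simp [add_assoc]⟩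

theorem IsLukas.nonneg_of_mem_areaVec {P : List ℤ} (hP : IsLukas P) {x : ℤ}
    (hx : x ∈ areaVec P) : 0 ≤ x := by
  obtain ⟨n, hn, rfl⟩ := exists_eq_add_sum_take_of_mem_areaVecAux hx
  simpa using hP.2.2.1 n hn

theorem IsLukas.sum_drop_le {P : List ℤ} (hP : IsLukas P) {n : ℕ} (hn : n < P.length) :
    (P.drop n).sum ≤ -1 := by
  have hsplit : (P.take n).sum + (P.drop n).sum = P.sum := by
    rw [← List.sum_append, List.take_append_drop]
  have := hP.2.2.1 n hn
  linarith [hP.2.2.2]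

theorem lambdaL_append (A B : List PTree) :
    lambdaL (A ++ B) = lambdaL A ++ lambdaL B := by
  induction A with
  | nil => simp [lambdaL]
  | cons t A ih => simp [lambdaL, ih]

mutual
theorem sum_lambdaT : ∀ t : PTree, (lambdaT t).sum = -1
  | .node ts => by simp [lambdaT, sum_lambdaL ts]; ring
theorem sum_lambdaL : ∀ ts : List PTree, (lambdaL ts).sum = -(ts.length : ℤ)
  | [] => by simp [lambdaL]
  | t :: ts => by simp [lambdaL, sum_lambdaT t, sum_lambdaL ts]
end

mutual
theorem sum_areaVecAux_lambdaT : ∀ (t : PTree) (h : ℤ),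
    (areaVecAux h (lambdaT t)).sum = h * internCount t + rthornT t
  | .node [], h => by
    simp [lambdaT, lambdaL, areaVecAux, internCount, rthornT, rthornL]
  | .node (t :: ts), h => by
    have hchildren := sum_areaVecAux_lambdaL (t :: ts) (h + ts.length)
    simp only [lambdaT, areaVecAux, List.length_cons, Nat.cast_add, Nat.cast_one,
      add_sub_cancel_right, if_pos (by positivity : (0 : ℤ) ≤ ts.length),
      List.singleton_append, List.sum_cons, hchildren]
    simp only [internCount, rthornT]
    push_cast
    ring
theorem sum_areaVecAux_lambdaL : ∀ (ts : List PTree) (g : ℤ),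
    (areaVecAux g (lambdaL ts)).sum = (g - ts.length + 1) * internCountL ts + rthornL ts
  | [], g => by simp [lambdaL, areaVecAux, internCountL, rthornL]
  | t :: ts, g => by
    simp only [lambdaL, areaVecAux_append, List.sum_append, sum_lambdaT t,
      sum_areaVecAux_lambdaT t g, sum_areaVecAux_lambdaL ts (g + -1), internCountL, rthornL,
      List.length_cons]
    push_cast
    ring
end

theorem tauStack_cons (s : ℤ) (Q : List ℤ) :
    tauStack (s :: Q) =
      if s < 0 then PTree.node [] :: tauStack Q
      else PTree.node ((tauStack Q).take (s.toNat + 1)) :: (tauStack Q).drop (s.toNat + 1) :=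
  rfl

/-- The suffix condition on `Q` makes the stack hold at least `k + 1` trees whenever an
up-step `U_k` is read. -/
theorem lambdaL_tauStack {Q : List ℤ} (hstep : ∀ s ∈ Q, -1 ≤ s)
    (hsuf : ∀ n < Q.length, (Q.drop n).sum ≤ -1) :
    ((tauStack Q).length : ℤ) = -Q.sum ∧ lambdaL (tauStack Q) = Q := by
  induction Q with
  | nil => simp [tauStack, lambdaL]
  | cons s Q ih =>
    have hs : s + Q.sum ≤ -1 := by simpa using hsuf 0 (by simp)
    obtain ⟨hlen, hlam⟩ := ih (fun x hx => hstep x (by simp [hx]))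
      (fun n hn => by simpa using hsuf (n + 1) (by simpa using hn))
    rw [tauStack_cons]
    split_ifs with hneg
    · have hD : s = -1 := by linarith [hstep s (by simp)]
      subst hD
      refine ⟨by simp [hlen], by simp [lambdaL, lambdaT, hlam]⟩
    · have htake : ((tauStack Q).take (s.toNat + 1)).length = s.toNat + 1 := by
        simp only [List.length_take]; omega
      refine ⟨by simp only [List.length_cons, List.length_drop, List.sum_cons]; omega, ?_⟩
      simp only [lambdaL, lambdaT, htake, List.cons_append, ← lambdaL_append,
        List.take_append_drop, hlam]
      congr 1
      omega

theorem IsLukas.lambdaT_tau {P : List ℤ} (hP : IsLukas P) : lambdaT (tau P) = P := by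
  obtain ⟨hlen, hlam⟩ := lambdaL_tauStack hP.2.1 fun n hn => hP.sum_drop_le hn
  rw [hP.2.2.2] at hlen
  obtain ⟨T, hT⟩ := List.length_eq_one_iff.mp (by omega : (tauStack P).length = 1)
  simpa [tau, hT, lambdaL] using hlam

theorem IsLukas.area_eq_sum_areaVec {P : List ℤ} (hP : IsLukas P) :
    (area P : ℤ) = (areaVec P).sum := by
  rw [area, Nat.cast_list_sum, List.map_map]
  congr 1
  exact (List.map_congr_left fun x hx => Int.toNat_of_nonneg (hP.nonneg_of_mem_areaVec hx)).trans
    (List.map_id _)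

end Luka

open Luka in
/-- **Proposition 3.3.**  Let `P` be a Łukasiewicz path and `T = τ(P)` the plane tree
associated to `P` by the classical bijection.  Then `area(P) = rthorn(T)`. -/
theorem area_eq_rthorn_tau (P : List ℤ) (hP : IsLukas P) :
    area P = rthornT (tau P) := by
  have h := sum_areaVecAux_lambdaT (tau P) 0
  rw [hP.lambdaT_tau, ← areaVec, ← hP.area_eq_sum_areaVec, zero_mul, zero_add] at h
  exact_mod_cast h
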